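/- Let G be the group with presentation ⟨a, b | aba = bab, a² = b²⟩ (the fundamental group of the affine complement of Zariski's three-cuspidal quartic). Then the commutator subgroup G' = [G,G] is isomorphic to the cyclic group ℤ/3ℤ. Consequently G'/G'' is ℤ-torsion and all higher-order Alexander modules and higher-order degrees δ_n of this group vanish. -/

import Mathlib

/-!
Put `x = a b⁻¹`. The relation `a² = b²` says that conjugation by `a` and by `b` inverts `x`, and
together with the braid relation it gives `x³ = 1`. Hence `⟨x⟩` is normal, and since `b = x⁻¹ a`
the quotient by it is generated by the image of `a`, so it is abelian and `G' ≤ ⟨x⟩`. Conversely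
`x = x⁻² = ⁅a, x⁆ ∈ G'`. Finally `x ≠ 1` because `a ↦ (0 1)`, `b ↦ (1 2)` defines a map onto `S₃`,
so `G' = ⟨x⟩` has prime order `3`, and a finite group has torsion abelianization.
-/

/-- Relators of `⟨a, b | aba = bab, a² = b²⟩`, with `a = of 0` and `b = of 1`. -/
def quarticRels : Set (FreeGroup (Fin 2)) :=
  {FreeGroup.of 0 * FreeGroup.of 1 * FreeGroup.of 0 *
      (FreeGroup.of 1 * FreeGroup.of 0 * FreeGroup.of 1)⁻¹,
    FreeGroup.of 0 ^ 2 * (FreeGroup.of 1 ^ 2)⁻¹}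

section
open Subgroup
variable {G : Type*} [Group G] {a b : G}

theorem conj_mul_inv_eq_inv_of_sq_eq_sq (h : a ^ 2 = b ^ 2) :
    a * (a * b⁻¹) * a⁻¹ = (a * b⁻¹)⁻¹ := by
  calc a * (a * b⁻¹) * a⁻¹ = a ^ 2 * b⁻¹ * a⁻¹ := by rw [sq]; group
    _ = (a * b⁻¹)⁻¹ := by rw [h]; group

theorem conj_mul_inv_eq_inv_of_sq_eq_sq' (h : a ^ 2 = b ^ 2) :
    b * (a * b⁻¹) * b⁻¹ = (a * b⁻¹)⁻¹ := by
  calc b * (a * b⁻¹) * b⁻¹ = b * a * (b ^ 2)⁻¹ := by group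
    _ = (a * b⁻¹)⁻¹ := by rw [← h]; group

theorem mul_inv_pow_three_eq_one (hbraid : a * b * a = b * a * b) (hsq : a ^ 2 = b ^ 2) :
    (a * b⁻¹) ^ 3 = 1 := by
  calc (a * b⁻¹) ^ 3 = a * ((b ^ 2)⁻¹ * (b * a * b) * (b ^ 2)⁻¹) * a * b⁻¹ := by
        rw [pow_three]; group
    _ = 1 := by rw [← hbraid, ← hsq]; group

theorem Subgroup.zpowers_normal_of_conj_eq_inv {s : Set G} (hs : closure s = ⊤) {x : G}
    (h : ∀ g ∈ s, g * x * g⁻¹ = x⁻¹) : (zpowers x).Normal := by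
  refine normalizer_eq_top_iff.mp (eq_top_iff.mpr ?_)
  rw [← hs, closure_le]
  intro g hg
  rw [SetLike.mem_coe, mem_normalizer_iff_map_conj_eq, MonoidHom.map_zpowers]
  simp [h g hg]

open scoped commutatorElement in
theorem commutator_eq_zpowers_mul_inv (hgen : closure {a, b} = ⊤)
    (hbraid : a * b * a = b * a * b) (hsq : a ^ 2 = b ^ 2) :
    commutator G = zpowers (a * b⁻¹) := by
  have hconj_a := conj_mul_inv_eq_inv_of_sq_eq_sq hsq
  have hnormal : (zpowers (a * b⁻¹)).Normal := by
    refine zpowers_normal_of_conj_eq_inv hgen fun g hg => ?_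
    rcases hg with rfl | rfl
    exacts [hconj_a, conj_mul_inv_eq_inv_of_sq_eq_sq' hsq]
  have hsup : zpowers (a * b⁻¹) ⊔ zpowers a = ⊤ := by
    rw [eq_top_iff, ← hgen, closure_le, Set.insert_subset_iff, Set.singleton_subset_iff]
    refine ⟨mem_sup_right (mem_zpowers a), ?_⟩
    have hb : (a * b⁻¹)⁻¹ * a = b := by group
    have := mul_mem (mem_sup_left (inv_mem (mem_zpowers (a * b⁻¹))))
      (mem_sup_right (mem_zpowers a))
    rwa [hb] at this
  have hcomm : ⁅a, a * b⁻¹⁆ = a * b⁻¹ := by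
    rw [commutatorElement_def, hconj_a]
    calc (a * b⁻¹)⁻¹ * (a * b⁻¹)⁻¹
        = (a * b⁻¹)⁻¹ * (a * b⁻¹)⁻¹ * (a * b⁻¹) ^ 3 := by
          rw [mul_inv_pow_three_eq_one hbraid hsq, mul_one]
      _ = a * b⁻¹ := by rw [pow_three]; group
  refine le_antisymm (hnormal.commutator_le_of_self_sup_commutative_eq_top hsup inferInstance) ?_
  rw [zpowers_le, ← hcomm]
  exact commutator_mem_commutator (mem_top a) (mem_top _)
end

section
open PresentedGroup Subgroup

theorem quarticRels_braid :
    (of 0 * of 1 * of 0 : PresentedGroup quarticRels) = of 1 * of 0 * of 1 :=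
  mul_inv_eq_one.mp (one_of_mem (Set.mem_insert _ _))

theorem quarticRels_sq : (of 0 ^ 2 : PresentedGroup quarticRels) = of 1 ^ 2 :=
  mul_inv_eq_one.mp (one_of_mem (Set.mem_insert_of_mem _ rfl))

theorem quarticRels_closure_of :
    closure {of 0, of 1} = (⊤ : Subgroup (PresentedGroup quarticRels)) := by
  rw [← closure_range_of]
  congr 1
  ext
  simp [eq_comm]

def quarticRelsToPerm : PresentedGroup quarticRels →* Equiv.Perm (Fin 3) :=
  toGroup (f := ![Equiv.swap 0 1, Equiv.swap 1 2]) (by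
    rintro r (rfl | rfl) <;>
      simp only [map_mul, map_inv, map_pow, FreeGroup.lift_apply_of] <;> decide)

theorem quarticRels_of_mul_inv_ne_one :
    (of 0 * (of 1)⁻¹ : PresentedGroup quarticRels) ≠ 1 := by
  intro h
  have h' := congrArg quarticRelsToPerm h
  rw [map_mul, map_inv, quarticRelsToPerm, toGroup.of, toGroup.of, map_one] at h'
  exact absurd h' (by decide)

end

theorem three_cuspidal_quartic_commutator :
    Nonempty (↥(commutator (PresentedGroup quarticRels)) ≃* Multiplicative (ZMod 3)) ∧
      ∀ x : Abelianization ↥(commutator (PresentedGroup quarticRels)), IsOfFinOrder x := by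
  have hcomm := commutator_eq_zpowers_mul_inv quarticRels_closure_of quarticRels_braid
    quarticRels_sq
  have horder : orderOf (.of 0 * (.of 1)⁻¹ : PresentedGroup quarticRels) = 3 :=
    orderOf_eq_prime (mul_inv_pow_three_eq_one quarticRels_braid quarticRels_sq)
      quarticRels_of_mul_inv_ne_one
  have hcard : Nat.card (commutator (PresentedGroup quarticRels)) = 3 := by
    rw [hcomm, Nat.card_zpowers, horder]
  have : Finite (commutator (PresentedGroup quarticRels)) := Nat.finite_of_card_ne_zero (by omega)
  exact ⟨⟨mulEquivOfPrimeCardEq hcard (by simp)⟩, fun x => isOfFinOrder_of_finite x⟩
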